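/- Let U : ℝⁿ → ℝ be smooth and bounded above, H(ξ,q) = |ξ|²/2 + U(q), and let ζ(t) = (ξ(t),q(t)) solve q' = ξ, ξ' = -∇U(q) + αξ with α > 0. If μ(t) := H(ζ(t)) - sup U satisfies μ(0) > 0, then μ(t) ≥ e^{2αt} μ(0) for all t ≥ 0; consequently |ξ(t)|² ≥ 2 e^{2αt} μ(0) and e^{-αt}|ξ(t)|² → +∞ as t → +∞. -/

import Mathlib

open Real Filter

/-- If `U` is smooth and bounded above, `ζ = (ξ,q)` solves `q' = ξ`,
`ξ' = -∇U(q) + αξ` with `α > 0`, and `μ(t) = H(ζ(t)) - sup U` satisfies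
`μ(0) > 0`, then `μ(t) ≥ e^{2αt} μ(0)` for `t ≥ 0`; consequently
`|ξ(t)|² ≥ 2 e^{2αt} μ(0)` and `e^{-αt}|ξ(t)|² → +∞` as `t → +∞`. -/
theorem escape_from_energy_sublevel
    (n : ℕ) (α : ℝ) (hα : 0 < α)
    (U : EuclideanSpace ℝ (Fin n) → ℝ) (hU : ContDiff ℝ (⊤ : ℕ∞) U)
    (hbdd : BddAbove (Set.range U))
    (ξ q : ℝ → EuclideanSpace ℝ (Fin n))
    (hq : ∀ t, HasDerivAt q (ξ t) t)
    (hξ : ∀ t, HasDerivAt ξ (-gradient U (q t) + α • ξ t) t)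
    (μ : ℝ → ℝ)
    (hμ : ∀ t, μ t = ‖ξ t‖ ^ 2 / 2 + U (q t) - sSup (Set.range U))
    (h0 : 0 < μ 0) :
    (∀ t ≥ 0, Real.exp (2 * α * t) * μ 0 ≤ μ t) ∧
    (∀ t ≥ 0, 2 * Real.exp (2 * α * t) * μ 0 ≤ ‖ξ t‖ ^ 2) ∧
    Tendsto (fun t => Real.exp (-α * t) * ‖ξ t‖ ^ 2) atTop atTop := by
  set C := sSup (Set.range U) with hC
  have hUd : Differentiable ℝ U := hU.differentiable (by simp)
  have hle : ∀ t, U (q t) ≤ C := fun t => le_csSup hbdd ⟨q t, rfl⟩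
  -- rewrite μ using inner product
  have hμ' : μ = fun t => (inner ℝ (ξ t) (ξ t) : ℝ) / 2 + U (q t) - C := by
    funext t
    rw [hμ t, real_inner_self_eq_norm_sq]
  -- derivative of μ
  have hμd : ∀ t, HasDerivAt μ (α * ‖ξ t‖ ^ 2) t := by
    intro t
    have h1 : HasDerivAt (fun t => (inner ℝ (ξ t) (ξ t) : ℝ))
        ((inner ℝ (ξ t) (-gradient U (q t) + α • ξ t) : ℝ)
          + (inner ℝ (-gradient U (q t) + α • ξ t) (ξ t) : ℝ)) t :=
      (hξ t).inner ℝ (hξ t)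
    have hg : HasGradientAt U (gradient U (q t)) (q t) := (hUd (q t)).hasGradientAt
    have h2 : HasDerivAt (fun t => U (q t))
        ((inner ℝ (gradient U (q t)) (ξ t) : ℝ)) t := by
      exact hg.hasFDerivAt.comp_hasDerivAt t (hq t)
    have h3 := ((h1.div_const 2).add h2).sub_const C
    simp only [Pi.add_apply] at h3
    rw [← hμ'] at h3
    refine h3.congr_deriv ?_
    simp only [inner_add_left, inner_add_right, inner_neg_left, inner_neg_right,
      real_inner_smul_left, real_inner_smul_right, real_inner_self_eq_norm_sq,
      real_inner_comm (gradient U (q t)) (ξ t)]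
    ring
  -- μ t ≤ ‖ξ t‖²/2
  have hμle : ∀ t, μ t ≤ ‖ξ t‖ ^ 2 / 2 := by
    intro t
    rw [hμ t]
    have := hle t
    linarith
  -- auxiliary function
  set f : ℝ → ℝ := fun t => Real.exp (-(2 * α) * t) * μ t with hf
  have hfd : ∀ t, HasDerivAt f
      (-(2 * α) * Real.exp (-(2 * α) * t) * μ t +
        Real.exp (-(2 * α) * t) * (α * ‖ξ t‖ ^ 2)) t := by
    intro t
    have he : HasDerivAt (fun t => Real.exp (-(2 * α) * t))
        (-(2 * α) * Real.exp (-(2 * α) * t)) t := by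
      simpa [mul_comm] using ((hasDerivAt_id t).const_mul (-(2 * α))).exp
    exact he.mul (hμd t)
  have hmono : MonotoneOn f (Set.Ici 0) := by
    apply monotoneOn_of_deriv_nonneg (convex_Ici 0)
    · exact (Differentiable.continuous fun t => (hfd t).differentiableAt).continuousOn
    · exact fun t _ => ((hfd t).differentiableAt).differentiableWithinAt
    · intro t ht
      rw [(hfd t).deriv]
      have h1 := hμle t
      have h2 : (0:ℝ) < Real.exp (-(2 * α) * t) := Real.exp_pos _
      nlinarith [mul_le_mul_of_nonneg_left h1 (mul_pos hα h2).le]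
  have key : ∀ t ≥ 0, Real.exp (2 * α * t) * μ 0 ≤ μ t := by
    intro t ht
    have := hmono (Set.self_mem_Ici) (Set.mem_Ici.mpr ht) ht
    simp only [hf, mul_zero, Real.exp_zero, one_mul] at this
    calc Real.exp (2 * α * t) * μ 0 ≤ Real.exp (2 * α * t) * (Real.exp (-(2 * α) * t) * μ t) := by
          exact mul_le_mul_of_nonneg_left this (Real.exp_pos _).le
      _ = μ t := by
          rw [← mul_assoc, ← Real.exp_add]
          ring_nf
          simp
  have key2 : ∀ t ≥ 0, 2 * Real.exp (2 * α * t) * μ 0 ≤ ‖ξ t‖ ^ 2 := by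
    intro t ht
    have h1 := key t ht
    have h2 := hμle t
    linarith
  refine ⟨key, key2, ?_⟩
  have hlow : Tendsto (fun t => 2 * Real.exp (α * t) * μ 0) atTop atTop := by
    apply Tendsto.atTop_mul_const h0
    apply Tendsto.const_mul_atTop (by norm_num : (0:ℝ) < 2)
    exact Real.tendsto_exp_atTop.comp (tendsto_id.const_mul_atTop hα)
  apply tendsto_atTop_mono' atTop ?_ hlow
  filter_upwards [eventually_ge_atTop (0:ℝ)] with t ht
  have h1 := key2 t ht
  have h2 : (0:ℝ) < Real.exp (-α * t) := Real.exp_pos _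
  calc 2 * Real.exp (α * t) * μ 0
      = Real.exp (-α * t) * (2 * Real.exp (2 * α * t) * μ 0) := by
        rw [show Real.exp (-α * t) * (2 * Real.exp (2 * α * t) * μ 0)
            = 2 * (Real.exp (-α * t) * Real.exp (2 * α * t)) * μ 0 by ring,
          ← Real.exp_add]
        ring_nf
    _ ≤ Real.exp (-α * t) * ‖ξ t‖ ^ 2 := by
        exact mul_le_mul_of_nonneg_left h1 h2.le
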